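/- arXiv:2512.15141 — 3 statements merged into one kernel-verified Lean document; each statement's English description precedes it below -/
import Mathlib

section
/- Let A be the (M−1)×(M−1) tridiagonal matrix with diagonal entries η + 1/h², superdiagonal entries 1/(4h) − 1/(2h²), and subdiagonal entries −1/(4h) − 1/(2h²), where η ≥ 0 and 0 < h < 2. Then A is invertible. -/
/-!
For `0 < h < 2` the matrix is only weakly diagonally dominant: `|p| + |q| = 1 / h²`, with equality
when `η = 0`. Conjugating a tridiagonal Toeplitz matrix with entries `d, p, q` by
`diag(1, r, r², …)` scales the superdiagonal by `r` and the subdiagonal by `r⁻¹`; for `p q > 0`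
the choice `r = √(q / p)` gives both off-diagonals modulus `√(p q)`, so the conjugate is strictly
diagonally dominant as soon as `4 p q < d²`, and Gershgorin's theorem applies. Here
`4 p q = 1 / h⁴ - 1 / (4 h²) < (η + 1 / h²)²`.
-/

open Matrix

def tridiagToeplitz {K : Type*} [Zero K] (n : ℕ) (d p q : K) : Matrix (Fin n) (Fin n) K :=
  Matrix.of fun i j =>
    if i = j then d
    else if (j : ℕ) = (i : ℕ) + 1 then p
    else if (i : ℕ) = (j : ℕ) + 1 then q
    else 0

theorem Finset.sum_ite_comp_eq_le_of_injective {ι α M : Type*} [Fintype ι] [DecidableEq α]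
    [AddCommMonoid M] [Preorder M] {f : ι → α} (hf : Function.Injective f) (a : α) {s : M}
    (hs : 0 ≤ s) :
    (∑ i, if f i = a then s else 0) ≤ s := by
  rw [← Finset.sum_image (f := fun x => if x = a then s else 0) hf.injOn, Finset.sum_ite_eq']
  split_ifs
  exacts [le_rfl, hs]

theorem tridiagToeplitz_conj_diagonal_pow {K : Type*} [Field K] {r : K} (hr : r ≠ 0)
    (n : ℕ) (d p q : K) :
    diagonal (fun i : Fin n => (r ^ (i : ℕ))⁻¹) * tridiagToeplitz n d p q *
        diagonal (fun i : Fin n => r ^ (i : ℕ)) =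
      tridiagToeplitz n d (p * r) (q / r) := by
  ext i j
  simp only [diagonal_mul, mul_diagonal, tridiagToeplitz, of_apply]
  split_ifs with hij hsup hsub
  · subst hij; field_simp
  · rw [hsup, pow_succ]; field_simp
  · rw [hsub, pow_succ]; field_simp
  · simp

theorem sum_norm_tridiagToeplitz_offDiag_le {K : Type*} [NormedField K] {n : ℕ} (d p q : K)
    (k : Fin n) :
    ∑ j ∈ Finset.univ.erase k, ‖tridiagToeplitz n d p q k j‖ ≤ ‖p‖ + ‖q‖ := by
  have hentry : ∀ j ∈ Finset.univ.erase k, ‖tridiagToeplitz n d p q k j‖ ≤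
      (if (j : ℕ) = k + 1 then ‖p‖ else 0) + (if (j : ℕ) + 1 = k then ‖q‖ else 0) := by
    intro j hj
    have hjk : k ≠ j := (Finset.ne_of_mem_erase hj).symm
    simp only [tridiagToeplitz, of_apply, hjk, if_false]
    split_ifs <;> first | omega | simp
  calc ∑ j ∈ Finset.univ.erase k, ‖tridiagToeplitz n d p q k j‖
      ≤ ∑ j : Fin n,
          ((if (j : ℕ) = k + 1 then ‖p‖ else 0) + (if (j : ℕ) + 1 = k then ‖q‖ else 0)) :=
        (Finset.sum_le_sum hentry).trans <|
          Finset.sum_le_sum_of_subset_of_nonneg (Finset.erase_subset k _) fun _ _ _ => by positivity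
    _ ≤ ‖p‖ + ‖q‖ := by
      rw [Finset.sum_add_distrib]
      exact add_le_add
        (Finset.sum_ite_comp_eq_le_of_injective Fin.val_injective _ (norm_nonneg p))
        (Finset.sum_ite_comp_eq_le_of_injective (f := fun j : Fin n => (j : ℕ) + 1)
          (fun _ _ h => Fin.val_injective (Nat.succ_injective h)) _ (norm_nonneg q))

theorem det_tridiagToeplitz_ne_zero_of_norm_add_lt {K : Type*} [NormedField K] {n : ℕ}
    {d p q : K} (h : ‖p‖ + ‖q‖ < ‖d‖) : (tridiagToeplitz n d p q).det ≠ 0 :=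
  det_ne_zero_of_sum_row_lt_diag fun k =>
    (sum_norm_tridiagToeplitz_offDiag_le d p q k).trans_lt (by simpa [tridiagToeplitz] using h)

theorem det_tridiagToeplitz_ne_zero_of_four_mul_lt_sq {n : ℕ} {d p q : ℝ} (hpq : 0 < p * q)
    (hd : 4 * (p * q) < d ^ 2) : (tridiagToeplitz n d p q).det ≠ 0 := by
  have hqp : 0 < q / p := by
    have hp : p ≠ 0 := left_ne_zero_of_mul hpq.ne'
    rw [show q / p = p * q / p ^ 2 by field_simp]
    positivity
  set r := √(q / p)
  have hr : 0 < r := Real.sqrt_pos.2 hqp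
  have hsup : |p * r| = √(p * q) := by
    rw [← Real.sqrt_sq (abs_nonneg _), sq_abs, mul_pow, Real.sq_sqrt hqp.le]
    field_simp [left_ne_zero_of_mul hpq.ne']
  have hsub : |q / r| = √(p * q) := by
    rw [← Real.sqrt_sq (abs_nonneg _), sq_abs, div_pow, Real.sq_sqrt hqp.le]
    field_simp [right_ne_zero_of_mul hpq.ne']
  have hdom : ‖p * r‖ + ‖q / r‖ < ‖d‖ := by
    rw [Real.norm_eq_abs, Real.norm_eq_abs, Real.norm_eq_abs, hsup, hsub, ← two_mul,
      ← Real.sqrt_sq_eq_abs, show (2 : ℝ) = √(2 ^ 2) by simp, ← Real.sqrt_mul (by positivity)]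
    exact Real.sqrt_lt_sqrt (by positivity) (by linarith)
  have hconj := congrArg det (tridiagToeplitz_conj_diagonal_pow hr.ne' n d p q)
  rw [det_mul, det_mul, det_diagonal, det_diagonal, Finset.prod_inv_distrib,
    mul_right_comm, inv_mul_cancel₀ (Finset.prod_ne_zero_iff.2 fun i _ => pow_ne_zero _ hr.ne'),
    one_mul] at hconj
  exact hconj ▸ det_tridiagToeplitz_ne_zero_of_norm_add_lt hdom

theorem tridiagonal_matrix_invertible_general (M : ℕ) (h η : ℝ)
    (hh0 : 0 < h) (hh2 : h < 2) (hη : 0 ≤ η) :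
    IsUnit (Matrix.of (fun i j : Fin (M - 1) =>
      if i = j then η + 1 / h ^ 2
      else if (j : ℕ) = (i : ℕ) + 1 then 1 / (4 * h) - 1 / (2 * h ^ 2)
      else if (i : ℕ) = (j : ℕ) + 1 then -(1 / (4 * h)) - 1 / (2 * h ^ 2)
      else 0)) := by
  have hpq : (1 / (4 * h) - 1 / (2 * h ^ 2)) * (-(1 / (4 * h)) - 1 / (2 * h ^ 2)) =
      (4 - h ^ 2) / (16 * h ^ 4) := by
    field_simp
    ring
  have hpq_pos : 0 < (4 - h ^ 2) / (16 * h ^ 4) := div_pos (by nlinarith) (by positivity)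
  have hdom : 4 * ((4 - h ^ 2) / (16 * h ^ 4)) < (η + 1 / h ^ 2) ^ 2 := by
    calc 4 * ((4 - h ^ 2) / (16 * h ^ 4)) < (1 / h ^ 2) ^ 2 := by
          field_simp
          nlinarith
      _ ≤ (η + 1 / h ^ 2) ^ 2 := by gcongr; linarith
  rw [isUnit_iff_isUnit_det, isUnit_iff_ne_zero]
  exact det_tridiagToeplitz_ne_zero_of_four_mul_lt_sq (hpq ▸ hpq_pos) (hpq ▸ hdom)

theorem tridiagonal_matrix_invertible (M : ℕ) (hM : 2 ≤ M) (h η : ℝ)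
    (hh0 : 0 < h) (hh2 : h < 2) (hη : 0 ≤ η) :
    IsUnit (Matrix.of (fun i j : Fin (M - 1) =>
      if i = j then η + 1 / h ^ 2
      else if (j : ℕ) = (i : ℕ) + 1 then 1 / (4 * h) - 1 / (2 * h ^ 2)
      else if (i : ℕ) = (j : ℕ) + 1 then -(1 / (4 * h)) - 1 / (2 * h ^ 2)
      else 0)) :=
  tridiagonal_matrix_invertible_general M h η hh0 hh2 hη
end

section
/- Let A > 0, B > 0, τ > 0, λ ≥ 0 and d ∈ ℝ with d² ≤ A/2. Set a = −A + 1/τ − B, b = A + 1/τ + B, C = 2B·e^{−λτ/2}. If 1 ≤ 4B·(1 − B²e^{−λτ}τ²)/(B²e^{−λτ}τ²) (in particular B²e^{−λτ}τ² < 1), then √(a² + d²) + C ≤ √(b² + d²). -/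
open Real

/-!
Write `t = 1/τ`, `u = A + B` and `c = B e^{-λτ/2}`, so that `a = t - u`, `b = t + u` and
`C = 2c`. Squaring twice, the claim becomes `c² d² ≤ (t² - c²)(u² - c²)`. Since `c² ≤ B²`,
the second factor is at least `2AB`, and `d² ≤ A/2` together with the hypothesis, which reads
`c² ≤ 4B(t² - c²)`, bounds the left side by `(t² - c²) · 2AB`.
-/

theorem le_mul_of_le_sq_of_le_sq {x a b : ℝ} (ha : 0 ≤ a) (hb : 0 ≤ b)
    (hxa : x ≤ a ^ 2) (hxb : x ≤ b ^ 2) : x ≤ a * b := by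
  rcases le_total a b with hab | hba
  · exact hxa.trans (by rw [sq]; exact mul_le_mul_of_nonneg_left hab ha)
  · exact hxb.trans (by rw [sq]; exact mul_le_mul_of_nonneg_right hba hb)

theorem sqrt_sub_sq_add_sq_add_le_sqrt_add_sq_add_sq {t u c d : ℝ} (hc : 0 ≤ c)
    (hctu : c ^ 2 ≤ t * u) (h : c ^ 2 * d ^ 2 ≤ (t ^ 2 - c ^ 2) * (u ^ 2 - c ^ 2)) :
    √((t - u) ^ 2 + d ^ 2) + 2 * c ≤ √((t + u) ^ 2 + d ^ 2) := by
  set p := (t - u) ^ 2 + d ^ 2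
  have hp : 0 ≤ p := by positivity
  have hcross : c * √p ≤ t * u - c ^ 2 := by
    have hidentity : (t * u - c ^ 2) ^ 2 - c ^ 2 * p
        = (t ^ 2 - c ^ 2) * (u ^ 2 - c ^ 2) - c ^ 2 * d ^ 2 := by ring
    rw [show c * √p = √(c ^ 2 * p) by rw [sqrt_mul (sq_nonneg c), sqrt_sq hc],
      sqrt_le_left (sub_nonneg.2 hctu)]
    linarith
  rw [le_sqrt (by positivity) (by positivity)]
  nlinarith [sq_sqrt hp]

theorem mul_sq_le_of_le_four_mul_sub {A B K t d : ℝ} (hA : 0 ≤ A) (hB : 0 < B) (hK : 0 ≤ K)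
    (hKB : K ≤ B ^ 2) (hd : d ^ 2 ≤ A / 2) (hkey : K ≤ 4 * B * (t ^ 2 - K)) :
    K * d ^ 2 ≤ (t ^ 2 - K) * ((A + B) ^ 2 - K) := by
  have ht : 0 ≤ t ^ 2 - K := nonneg_of_mul_nonneg_right (hK.trans hkey) (by positivity)
  calc K * d ^ 2 ≤ K * (A / 2) := mul_le_mul_of_nonneg_left hd hK
    _ ≤ 4 * B * (t ^ 2 - K) * (A / 2) := mul_le_mul_of_nonneg_right hkey (by positivity)
    _ = (t ^ 2 - K) * (2 * A * B) := by ring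
    _ ≤ (t ^ 2 - K) * ((A + B) ^ 2 - K) :=
        mul_le_mul_of_nonneg_left (by nlinarith [sq_nonneg A]) ht

theorem amplification_factor_bound (A B τ lam d : ℝ)
    (hA : 0 < A) (hB : 0 < B) (hτ : 0 < τ) (hlam : 0 ≤ lam)
    (hd : d ^ 2 ≤ A / 2)
    (hkey : 1 ≤ 4 * B * (1 - B ^ 2 * Real.exp (-lam * τ) * τ ^ 2) /
        (B ^ 2 * Real.exp (-lam * τ) * τ ^ 2)) :
    Real.sqrt ((-A + 1 / τ - B) ^ 2 + d ^ 2) + 2 * B * Real.exp (-lam * τ / 2)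
      ≤ Real.sqrt ((A + 1 / τ + B) ^ 2 + d ^ 2) := by
  have hc2 : (B * exp (-lam * τ / 2)) ^ 2 = B ^ 2 * exp (-lam * τ) := by
    rw [mul_pow, ← exp_nat_mul]; ring_nf
  rw [mul_assoc 2 B]
  set c := B * exp (-lam * τ / 2)
  have hc : 0 ≤ c := by positivity
  have hcB : c ^ 2 ≤ B ^ 2 := by
    rw [hc2]; exact mul_le_of_le_one_right (sq_nonneg B) (exp_le_one_iff.2 (by nlinarith))
  rw [← hc2] at hkey
  have hkey_inv : c ^ 2 ≤ 4 * B * ((1 / τ) ^ 2 - c ^ 2) := by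
    have := (le_div_iff₀ (by positivity)).1 hkey
    calc c ^ 2 = c ^ 2 * τ ^ 2 * (1 / τ) ^ 2 := by field_simp
      _ ≤ 4 * B * (1 - c ^ 2 * τ ^ 2) * (1 / τ) ^ 2 :=
          mul_le_mul_of_nonneg_right (by linarith) (sq_nonneg _)
      _ = 4 * B * ((1 / τ) ^ 2 - c ^ 2) := by field_simp
  have hct : c ^ 2 ≤ (1 / τ) ^ 2 :=
    sub_nonneg.1 (nonneg_of_mul_nonneg_right ((sq_nonneg c).trans hkey_inv) (by positivity))
  have hctu : c ^ 2 ≤ 1 / τ * (A + B) :=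
    (le_mul_of_le_sq_of_le_sq (by positivity) hB.le hct hcB).trans (by gcongr; linarith)
  rw [show -A + 1 / τ - B = 1 / τ - (A + B) by ring, show A + 1 / τ + B = 1 / τ + (A + B) by ring]
  exact sqrt_sub_sq_add_sq_add_le_sqrt_add_sq_add_sq hc hctu
    (mul_sq_le_of_le_four_mul_sub hA.le hB (sq_nonneg c) hcB hd hkey_inv)
end

section
/- Let u : [0, t₁] → ℝ be C³ on (0, t₁] with |u'''(t)| ≤ C t^{δ−3} and |u''(t)| ≤ C t^{δ−2} for 1 < δ < 2, and u continuous at 0. Then with m = t₁/2, |u'(m) − (u(t₁) − u(0))/t₁| ≤ C'·t₁^{δ−1} for a constant C' depending only on C and δ. -/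
/-!
By the mean value theorem the difference quotient `(u t₁ - u 0) / t₁` equals `u' c` for some
`c ∈ (0, t₁)`, so it suffices to bound the oscillation of `u'` on `(0, t₁]`. Since
`|u''(t)| ≤ C t^(δ-2)` and `δ - 2 > -1`, the derivative `u'` is dominated by the primitive
`C t^(δ-1) / (δ-1)`, which stays bounded by `C t₁^(δ-1) / (δ-1)` all the way down to `t = 0`.
-/

open Real Set

theorem norm_sub_le_of_norm_deriv_le_rpow {E : Type*} [NormedAddCommGroup E] [NormedSpace ℝ E]
    {f f' : ℝ → E} {a b C p : ℝ} (ha : 0 < a) (hab : a ≤ b) (hp : p ≠ 0)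
    (hf : ContinuousOn f (Icc a b)) (hf' : ∀ x ∈ Ico a b, HasDerivWithinAt f (f' x) (Ici x) x)
    (bound : ∀ x ∈ Ico a b, ‖f' x‖ ≤ C * x ^ (p - 1)) :
    ‖f b - f a‖ ≤ C / p * (b ^ p - a ^ p) := by
  have hB' : ∀ x ∈ Icc a b,
      HasDerivAt (fun x => C / p * (x ^ p - a ^ p)) (C * x ^ (p - 1)) x := by
    intro x hx
    have h := ((hasDerivAt_rpow_const (p := p) (Or.inl (ha.trans_le hx.1).ne')).sub_const
      (a ^ p)).const_mul (C / p)
    rwa [← mul_assoc, div_mul_cancel₀ C hp] at h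
  refine image_norm_le_of_norm_deriv_right_le_deriv_boundary' (f := fun x => f x - f a)
    (hf.sub continuousOn_const) (fun x hx => (hf' x hx).sub_const (f a)) (by simp)
    (fun x hx => (hB' x hx).continuousAt.continuousWithinAt)
    (fun x hx => (hB' x (Ico_subset_Icc_self hx)).hasDerivWithinAt) bound ⟨hab, le_rfl⟩

theorem abs_sub_le_of_abs_deriv_le_rpow {f f' : ℝ → ℝ} {T C p : ℝ} (hC : 0 ≤ C) (hp : 0 < p)
    (hf : ∀ t ∈ Ioc 0 T, HasDerivWithinAt f (f' t) (Ioc 0 T) t)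
    (bound : ∀ t ∈ Ioc 0 T, |f' t| ≤ C * t ^ (p - 1))
    {x y : ℝ} (hx : x ∈ Ioc 0 T) (hy : y ∈ Ioc 0 T) :
    |f x - f y| ≤ C / p * T ^ p := by
  wlog hxy : y ≤ x generalizing x y
  · rw [abs_sub_comm]
    exact this hy hx (le_of_not_ge hxy)
  have hsub : Icc y x ⊆ Ioc 0 T := fun t ht => ⟨hy.1.trans_le ht.1, ht.2.trans hx.2⟩
  have h := norm_sub_le_of_norm_deriv_le_rpow hy.1 hxy hp.ne'
    (fun t ht => ((hf t (hsub ht)).continuousWithinAt).mono hsub)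
    (fun t ht => ((hf t (hsub (Ico_subset_Icc_self ht))).hasDerivAt
      (Ioc_mem_nhds (hy.1.trans_le ht.1) (ht.2.trans_le hx.2))).hasDerivWithinAt)
    (fun t ht => bound t (hsub (Ico_subset_Icc_self ht)))
  have hxT : x ^ p ≤ T ^ p := rpow_le_rpow hx.1.le hx.2 hp.le
  have hy0 : 0 ≤ y ^ p := rpow_nonneg hy.1.le p
  calc |f x - f y| ≤ C / p * (x ^ p - y ^ p) := h
    _ ≤ C / p * T ^ p := by gcongr; linarith

theorem first_step_difference_error_general (C δ : ℝ) (hC : 0 < C) (hδ1 : 1 < δ) :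
    ∃ C' : ℝ, 0 < C' ∧
      ∀ (t₁ : ℝ), 0 < t₁ →
      ∀ (u u' u'' u''' : ℝ → ℝ),
        ContinuousOn u (Icc 0 t₁) →
        (∀ t ∈ Ioc (0:ℝ) t₁, HasDerivWithinAt u (u' t) (Ioc 0 t₁) t) →
        (∀ t ∈ Ioc (0:ℝ) t₁, HasDerivWithinAt u' (u'' t) (Ioc 0 t₁) t) →
        (∀ t ∈ Ioc (0:ℝ) t₁, HasDerivWithinAt u'' (u''' t) (Ioc 0 t₁) t) →
        ContinuousOn u''' (Ioc 0 t₁) →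
        (∀ t ∈ Ioc (0:ℝ) t₁, |u'' t| ≤ C * t ^ (δ - 2)) →
        (∀ t ∈ Ioc (0:ℝ) t₁, |u''' t| ≤ C * t ^ (δ - 3)) →
        |u' (t₁ / 2) - (u t₁ - u 0) / t₁| ≤ C' * t₁ ^ (δ - 1) := by
  have hδ : 0 < δ - 1 := by linarith
  refine ⟨C / (δ - 1), by positivity, ?_⟩
  intro t₁ ht₁ u u' u'' u''' hu hu' hu'' _ _ hu''_le _
  obtain ⟨c, hc, hc_slope⟩ := exists_hasDerivAt_eq_slope u u' ht₁ hu
    fun x hx => (hu' x (Ioo_subset_Ioc_self hx)).hasDerivAt (Ioc_mem_nhds hx.1 hx.2)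
  rw [sub_zero] at hc_slope
  rw [← hc_slope]
  refine abs_sub_le_of_abs_deriv_le_rpow hC.le hδ hu'' (fun t ht => ?_)
    ⟨half_pos ht₁, half_le_self ht₁.le⟩ (Ioo_subset_Ioc_self hc)
  convert hu''_le t ht using 3
  ring

theorem first_step_difference_error (C δ : ℝ) (hC : 0 < C) (hδ1 : 1 < δ) (hδ2 : δ < 2) :
    ∃ C' : ℝ, 0 < C' ∧
      ∀ (t₁ : ℝ), 0 < t₁ →
      ∀ (u u' u'' u''' : ℝ → ℝ),
        ContinuousOn u (Icc 0 t₁) →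
        (∀ t ∈ Ioc (0:ℝ) t₁, HasDerivWithinAt u (u' t) (Ioc 0 t₁) t) →
        (∀ t ∈ Ioc (0:ℝ) t₁, HasDerivWithinAt u' (u'' t) (Ioc 0 t₁) t) →
        (∀ t ∈ Ioc (0:ℝ) t₁, HasDerivWithinAt u'' (u''' t) (Ioc 0 t₁) t) →
        ContinuousOn u''' (Ioc 0 t₁) →
        (∀ t ∈ Ioc (0:ℝ) t₁, |u'' t| ≤ C * t ^ (δ - 2)) →
        (∀ t ∈ Ioc (0:ℝ) t₁, |u''' t| ≤ C * t ^ (δ - 3)) →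
        |u' (t₁ / 2) - (u t₁ - u 0) / t₁| ≤ C' * t₁ ^ (δ - 1) :=
  first_step_difference_error_general C δ hC hδ1
end
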